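/- arXiv:2404.08495 — 4 statements merged into one kernel-verified Lean document; each statement's English description precedes it below -/
import Mathlib

section
/- Let S and A be finite sets, let d* and d be probability distributions on S, and let π*, π', π_SFT map each s ∈ S to a probability distribution on A, with d(s)·π_SFT(a|s) > 0 whenever d*(s)·π*(a|s) > 0. Let C = max_{s,a} (d*(s)·π*(a|s)) / (d(s)·π_SFT(a|s)). Then for every g : S×A → ℝ and for π̄ ∈ {π*, π'}: |E_{s∼d*, a∼π̄(s)}[g(s,a)]| ≤ √(2C) · √(E_{s∼d}[Σ_a (½π_SFT(a|s) + ½π'(a|s))·g(s,a)²]). In particular, the relaxed Q-evaluation concentrability coefficient C_eval(F) is at most √(2·max_{h,s,a} d^{π*}_h(s,a)/d^{π_SFT}_h(s,a)). -/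
open Finset

def probSimplex (A : Type*) [Fintype A] : Set (A → ℝ) :=
  {p | (∀ a, 0 ≤ p a) ∧ ∑ a, p a = 1}

/-!
Write `p(s,a) = d*(s)·π̄(a|s)`; it is a probability distribution on `S × A`. By Cauchy–Schwarz,
`(E_p g)² ≤ E_p g²`, so it suffices to dominate `p` pointwise by `2C` times the mixture
`q(s,a) = d(s)·(½π_SFT(a|s) + ½π'(a|s))`. For `π̄ = π*` this is the ratio bound
`d*·π* ≤ C·d·π_SFT`. For `π̄ = π'`, summing the ratio bound over actions gives `d* ≤ C·d`, hence
`d*·π' ≤ C·d·π'`.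
-/

theorem exists_pos_of_mem_probSimplex {ι : Type*} [Fintype ι] {p : ι → ℝ}
    (hp : p ∈ probSimplex ι) : ∃ i, 0 < p i := by
  obtain ⟨i, -, hi⟩ := exists_lt_of_sum_lt (s := univ) (f := 0) (g := p) (by simp [hp.2])
  exact ⟨i, hi⟩

theorem mul_mem_probSimplex_prod {S A : Type*} [Fintype S] [Fintype A] {μ : S → ℝ}
    {κ : S → A → ℝ} (hμ : μ ∈ probSimplex S) (hκ : ∀ s, κ s ∈ probSimplex A) :
    (fun x : S × A => μ x.1 * κ x.1 x.2) ∈ probSimplex (S × A) := by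
  refine ⟨fun x => mul_nonneg (hμ.1 x.1) ((hκ x.1).1 x.2), ?_⟩
  simp [Fintype.sum_prod_type, ← mul_sum, (hκ _).2, hμ.2]

theorem sq_sum_mul_le_sum_mul_sq {ι : Type*} [Fintype ι] {p : ι → ℝ} (hp : p ∈ probSimplex ι)
    (f : ι → ℝ) : (∑ i, p i * f i) ^ 2 ≤ ∑ i, p i * f i ^ 2 := by
  have h := sum_sq_le_sum_mul_sum_of_sq_le_mul univ (r := fun i => p i * f i)
    (fun i _ => hp.1 i) (fun i _ => mul_nonneg (hp.1 i) (sq_nonneg (f i)))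
    (fun i _ => (by ring : (p i * f i) ^ 2 = p i * (p i * f i ^ 2)).le)
  rwa [hp.2, one_mul] at h

theorem abs_sum_mul_le_sqrt_mul_sqrt_of_le_mul {ι : Type*} [Fintype ι] {p q : ι → ℝ} {K : ℝ}
    (hp : p ∈ probSimplex ι) (hK : 0 ≤ K) (hpq : ∀ i, p i ≤ K * q i) (f : ι → ℝ) :
    |∑ i, p i * f i| ≤ √K * √(∑ i, q i * f i ^ 2) := by
  have hdom : ∑ i, p i * f i ^ 2 ≤ K * ∑ i, q i * f i ^ 2 := by
    rw [mul_sum]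
    refine sum_le_sum fun i _ => ?_
    rw [← mul_assoc]
    exact mul_le_mul_of_nonneg_right (hpq i) (sq_nonneg _)
  rw [← Real.sqrt_mul hK, ← Real.sqrt_sq_eq_abs]
  exact Real.sqrt_le_sqrt ((sq_sum_mul_le_sum_mul_sq hp f).trans hdom)

theorem le_mul_of_div_le_of_pos_imp_pos {x y C : ℝ} (hx : 0 ≤ x) (hy : 0 ≤ y) (hC : 0 ≤ C)
    (hpos : 0 < x → 0 < y) (hdiv : 0 < x → x / y ≤ C) : x ≤ C * y := by
  rcases hx.eq_or_lt with rfl | hx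
  · positivity
  · exact (div_le_iff₀ (hpos hx)).1 (hdiv hx)

section Concentrability

variable {S A : Type*} [Fintype S] [Fintype A] {dstar d : S → ℝ} {pistar piSFT : S → A → ℝ}
  {C : ℝ}

theorem concentrability_pos (hdstar : dstar ∈ probSimplex S)
    (hpistar : ∀ s, pistar s ∈ probSimplex A)
    (hpos : ∀ s a, 0 < dstar s * pistar s a → 0 < d s * piSFT s a)
    (hC : ∀ s a, 0 < dstar s * pistar s a → dstar s * pistar s a / (d s * piSFT s a) ≤ C) :
    0 < C := by
  obtain ⟨⟨s, a⟩, h⟩ := exists_pos_of_mem_probSimplex (mul_mem_probSimplex_prod hdstar hpistar)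
  exact (div_pos h (hpos s a h)).trans_le (hC s a h)

theorem occupancy_le_mul_occupancy (hdstar : dstar ∈ probSimplex S) (hd : d ∈ probSimplex S)
    (hpistar : ∀ s, pistar s ∈ probSimplex A) (hpiSFT : ∀ s, piSFT s ∈ probSimplex A)
    (hpos : ∀ s a, 0 < dstar s * pistar s a → 0 < d s * piSFT s a)
    (hC : ∀ s a, 0 < dstar s * pistar s a → dstar s * pistar s a / (d s * piSFT s a) ≤ C)
    (s : S) (a : A) : dstar s * pistar s a ≤ C * (d s * piSFT s a) :=
  le_mul_of_div_le_of_pos_imp_pos (mul_nonneg (hdstar.1 s) ((hpistar s).1 a))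
    (mul_nonneg (hd.1 s) ((hpiSFT s).1 a)) (concentrability_pos hdstar hpistar hpos hC).le
    (hpos s a) (hC s a)

theorem state_le_mul_state (hdstar : dstar ∈ probSimplex S) (hd : d ∈ probSimplex S)
    (hpistar : ∀ s, pistar s ∈ probSimplex A) (hpiSFT : ∀ s, piSFT s ∈ probSimplex A)
    (hpos : ∀ s a, 0 < dstar s * pistar s a → 0 < d s * piSFT s a)
    (hC : ∀ s a, 0 < dstar s * pistar s a → dstar s * pistar s a / (d s * piSFT s a) ≤ C)
    (s : S) : dstar s ≤ C * d s := by
  have h := sum_le_sum fun a (_ : a ∈ univ) =>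
    occupancy_le_mul_occupancy hdstar hd hpistar hpiSFT hpos hC s a
  rwa [← mul_sum, ← mul_sum, ← mul_sum, (hpistar s).2, (hpiSFT s).2, mul_one, mul_one] at h

end Concentrability

/-- **Q-evaluation change of measure bound.**  Let `S`, `A` be finite sets, `d*`, `d`
probability distributions on `S`, and `π*, π', π_SFT` policies (rows are distributions over `A`),
with `d(s)·π_SFT(a|s) > 0` whenever `d*(s)·π*(a|s) > 0`.  If `C` bounds (in particular, is the
maximum of) the ratios `(d*(s)·π*(a|s))/(d(s)·π_SFT(a|s))`, then for every `g : S × A → ℝ` and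
for `π̄ ∈ {π*, π'}`,
`|E_{s∼d*, a∼π̄(s)}[g(s,a)]| ≤ √(2C) · √(E_{s∼d}[Σ_a (½π_SFT(a|s)+½π'(a|s))·g(s,a)²])`.
(This is the inequality implying `C_eval(F) ≤ √(2·max_{h,s,a} d^{π*}_h(s,a)/d^{π_SFT}_h(s,a))`.) -/
theorem eval_change_of_measure {S A : Type*} [Fintype S] [Fintype A]
    (dstar d : S → ℝ)
    (hdstar : dstar ∈ probSimplex S) (hd : d ∈ probSimplex S)
    (pistar pi' piSFT : S → A → ℝ)
    (hpistar : ∀ s, pistar s ∈ probSimplex A)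
    (hpi' : ∀ s, pi' s ∈ probSimplex A)
    (hpiSFT : ∀ s, piSFT s ∈ probSimplex A)
    (hpos : ∀ s a, 0 < dstar s * pistar s a → 0 < d s * piSFT s a)
    (C : ℝ) (hC : ∀ s a, 0 < dstar s * pistar s a →
      dstar s * pistar s a / (d s * piSFT s a) ≤ C)
    (g : S → A → ℝ) :
    ∀ pib, (pib = pistar ∨ pib = pi') →
      |∑ s, ∑ a, dstar s * pib s a * g s a|
        ≤ Real.sqrt (2 * C) *
            Real.sqrt (∑ s, d s * ∑ a, (piSFT s a / 2 + pi' s a / 2) * g s a ^ 2) := by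
  intro pib hpib
  have hC0 := (concentrability_pos hdstar hpistar hpos hC).le
  have hdom : ∀ x : S × A, dstar x.1 * pib x.1 x.2
      ≤ 2 * C * (d x.1 * (piSFT x.1 x.2 / 2 + pi' x.1 x.2 / 2)) := by
    rintro ⟨s, a⟩
    have hSFT_nonneg := mul_nonneg hC0 (mul_nonneg (hd.1 s) ((hpiSFT s).1 a))
    have h'_nonneg := mul_nonneg hC0 (mul_nonneg (hd.1 s) ((hpi' s).1 a))
    rcases hpib with rfl | rfl
    · linarith [occupancy_le_mul_occupancy hdstar hd hpistar hpiSFT hpos hC s a]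
    · linarith [mul_le_mul_of_nonneg_right (state_le_mul_state hdstar hd hpistar hpiSFT hpos hC s)
        ((hpi' s).1 a)]
  have hpib_mem : ∀ s, pib s ∈ probSimplex A := by rcases hpib with rfl | rfl <;> assumption
  have h := abs_sum_mul_le_sqrt_mul_sqrt_of_le_mul (mul_mem_probSimplex_prod hdstar hpib_mem)
    (by positivity) hdom (fun x => g x.1 x.2)
  simpa only [Fintype.sum_prod_type, mul_sum, mul_assoc] using h
end

section
/- Let A be a finite set, q a strictly positive probability distribution on A, and λ, η > 0. Define a sequence of distributions by p¹ = q and, for t ≥ 1, p^{t+1} = argmin_{p∈Δ(A)} ⟨−Q^t, p⟩ + λ·KL(p‖q) + (1/η)·KL(p‖p^t), where each Q^t : A → ℝ satisfies 0 ≤ Q^t(a) ≤ r_max for all a. Then for every t ≥ 1, KL(p^t‖q) ≤ r_max·(t−1)/λ. -/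
/-!
Compare the minimizer `p^{t+1}` with the admissible point `p^t`: there the proximal term
`KL(p‖p^t)` vanishes, while at `p^{t+1}` it is nonnegative, and the linear term `⟨-Q^t, ·⟩`
differs between the two points by at most `r_max`. Hence
`λ KL(p^{t+1}‖q) ≤ λ KL(p^t‖q) + r_max`, and the bound follows by induction.

Nonnegativity of `KL(p^{t+1}‖p^t)` needs `p^t` to have full support (`log 0 = 0` makes the
formula meaningless otherwise). This holds inductively: the objective is linear plus
`(λ + 1/η) Σ p log p`, whose slope `log ε → -∞` at the boundary forces every minimizer
into the interior of the simplex.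
-/

open Finset

/-- KL divergence between two distributions on a finite set. -/
noncomputable def KLdiv {A : Type*} [Fintype A] (p q : A → ℝ) : ℝ :=
  ∑ a, p a * Real.log (p a / q a)

/-- The regularized mirror-descent objective
`p ↦ ⟨−Q, p⟩ + λ·KL(p‖q) + (1/η)·KL(p‖pₜ)`. -/
noncomputable def mdObj {A : Type*} [Fintype A]
    (Q : A → ℝ) (q pt : A → ℝ) (lam eta : ℝ) (p : A → ℝ) : ℝ :=
  (∑ a, -Q a * p a) + lam * KLdiv p q + (1 / eta) * KLdiv p pt

open Real Filter Topology InformationTheory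

lemma mul_log_sub_mul_log_le {y ε : ℝ} (hε : 0 ≤ ε) (hεy : ε < y) :
    (y - ε) * log (y - ε) - y * log y ≤ -ε * log y := by
  have : (y - ε) * log (y - ε) ≤ (y - ε) * log y :=
    mul_le_mul_of_nonneg_left (log_le_log (by linarith) (by linarith)) (by linarith)
  linarith

lemma eventually_mul_log_add_neg (c C : ℝ) (hc : 0 < c) :
    ∀ᶠ ε in 𝓝[>] (0 : ℝ), c * log ε + C < 0 :=
  (tendsto_atBot_add_const_right _ C
    (tendsto_log_nhdsGT_zero.const_mul_atBot hc)).eventually_lt_atBot 0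

section

variable {A : Type*} [Fintype A]

lemma exists_pos_of_mem_probSimplex_s9 {p : A → ℝ} (hp : p ∈ probSimplex A) : ∃ a, 0 < p a := by
  by_contra! h
  linarith [hp.2, sum_nonpos fun a (_ : a ∈ univ) => h a]

lemma sum_mul_le_of_mem_probSimplex {p f : A → ℝ} {M : ℝ} (hp : p ∈ probSimplex A)
    (hf : ∀ a, f a ≤ M) : ∑ a, f a * p a ≤ M :=
  calc ∑ a, f a * p a ≤ ∑ a, M * p a :=
        sum_le_sum fun a _ => mul_le_mul_of_nonneg_right (hf a) (hp.1 a)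
    _ = M := by rw [← mul_sum, hp.2, mul_one]

lemma add_single_sub_single_mem_probSimplex [DecidableEq A] {p : A → ℝ}
    (hp : p ∈ probSimplex A) {i j : A} (hij : i ≠ j) {ε : ℝ} (hε : 0 ≤ ε) (hεj : ε ≤ p j) :
    p + Pi.single i ε - Pi.single j ε ∈ probSimplex A := by
  refine ⟨fun a => ?_, ?_⟩
  · rcases eq_or_ne a j with rfl | haj
    · simp only [Pi.sub_apply, Pi.add_apply, Pi.single_eq_of_ne' hij, Pi.single_eq_same]
      linarith
    · rw [Pi.sub_apply, Pi.add_apply, Pi.single_eq_of_ne haj, sub_zero]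
      exact add_nonneg (hp.1 a) (by rw [Pi.single_apply]; split_ifs <;> linarith)
  · simp [sum_add_distrib, sum_sub_distrib, hp.2]

lemma sum_add_single_sub_single_sub_sum [DecidableEq A] (g : A → ℝ → ℝ) (p : A → ℝ)
    {i j : A} (hij : i ≠ j) (ε : ℝ) :
    ∑ a, g a ((p + Pi.single i ε - Pi.single j ε : A → ℝ) a) - ∑ a, g a (p a)
      = (g i (p i + ε) - g i (p i)) + (g j (p j - ε) - g j (p j)) := by
  rw [← sum_sub_distrib, Fintype.sum_eq_add i j hij]
  · simp [hij, hij.symm]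
  · rintro a ⟨hai, haj⟩
    simp [hai, haj]

lemma KLdiv_self (p : A → ℝ) : KLdiv p p = 0 :=
  sum_eq_zero fun a _ => by rcases eq_or_ne (p a) 0 with h | h <;> simp [h]

lemma KLdiv_nonneg {p r : A → ℝ} (hp : p ∈ probSimplex A) (hr : r ∈ probSimplex A)
    (hrpos : ∀ a, 0 < r a) : 0 ≤ KLdiv p r := by
  have hterm : ∀ a, p a * log (p a / r a)
      = r a * klFun (p a / r a) + (p a - r a) := by
    intro a
    have hra := (hrpos a).ne'
    rw [klFun_apply]
    field_simp
    ring
  have hmass : ∑ a, (p a - r a) = 0 := by rw [sum_sub_distrib, hp.2, hr.2, sub_self]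
  rw [KLdiv, sum_congr rfl fun a _ => hterm a, sum_add_distrib, hmass, add_zero]
  exact sum_nonneg fun a _ => mul_nonneg (hrpos a).le
    (klFun_nonneg (div_nonneg (hp.1 a) (hrpos a).le))

theorem pos_of_isMinOn_sum_mul_add_mul_log {K : A → ℝ} {c : ℝ} (hc : 0 < c) {p : A → ℝ}
    (hp : p ∈ probSimplex A)
    (hmin : IsMinOn (fun p : A → ℝ => ∑ a, (K a * p a + c * (p a * log (p a))))
      (probSimplex A) p)
    (i : A) : 0 < p i := by
  classical
  by_contra! hi
  have hi0 : p i = 0 := le_antisymm hi (hp.1 i)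
  obtain ⟨j, hj⟩ := exists_pos_of_mem_probSimplex_s9 hp
  have hij : i ≠ j := by rintro rfl; linarith
  -- moving a small mass `ε` from `j` to `i` changes the objective by at most `ε (C + c log ε)`
  set C := K i - K j - c * log (p j)
  obtain ⟨ε, hεC, hε, hεj⟩ : ∃ ε, c * log ε + C < 0 ∧ ε ∈ Set.Ioo 0 (p j) :=
    ((eventually_mul_log_add_neg c C hc).and (Ioo_mem_nhdsGT hj)).exists
  have hdiff := sum_add_single_sub_single_sub_sum (fun a x => K a * x + c * (x * log x)) p hij ε
  have hle := isMinOn_iff.mp hmin _ (add_single_sub_single_mem_probSimplex hp hij hε.le hεj.le)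
  have hj_le := mul_le_mul_of_nonneg_left (mul_log_sub_mul_log_le hε.le hεj) hc.le
  have hgain : ε * (c * log ε + C) < 0 := mul_neg_of_pos_of_neg hε hεC
  simp only [hi0, zero_add, mul_zero] at hdiff
  linarith

lemma mdObj_eq_sum_mul_add_mul_log {Q q pt : A → ℝ} {lam eta : ℝ} (hq : ∀ a, 0 < q a)
    (hpt : ∀ a, 0 < pt a) (p : A → ℝ) :
    mdObj Q q pt lam eta p = ∑ a, ((-Q a - lam * log (q a) - 1 / eta * log (pt a)) * p a
      + (lam + 1 / eta) * (p a * log (p a))) := by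
  simp only [mdObj, KLdiv, mul_sum, ← sum_add_distrib]
  refine sum_congr rfl fun a _ => ?_
  rcases eq_or_ne (p a) 0 with h | h
  · simp [h]
  · rw [log_div h (hq a).ne', log_div h (hpt a).ne']
    ring

theorem pos_of_isMinOn_mdObj {Q q pt p : A → ℝ} {lam eta : ℝ} (hlam : 0 ≤ lam) (heta : 0 < eta)
    (hq : ∀ a, 0 < q a) (hpt : ∀ a, 0 < pt a) (hp : p ∈ probSimplex A)
    (hmin : IsMinOn (mdObj Q q pt lam eta) (probSimplex A) p) (a : A) : 0 < p a := by
  rw [funext (mdObj_eq_sum_mul_add_mul_log hq hpt)] at hmin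
  exact pos_of_isMinOn_sum_mul_add_mul_log (by positivity) hp hmin a

theorem KLdiv_le_of_isMinOn_mdObj {Q q pt p : A → ℝ} {lam eta rmax : ℝ} (heta : 0 < eta)
    (hQ : ∀ a, Q a ∈ Set.Icc 0 rmax) (hpt : pt ∈ probSimplex A) (hptpos : ∀ a, 0 < pt a)
    (hp : p ∈ probSimplex A) (hmin : IsMinOn (mdObj Q q pt lam eta) (probSimplex A) p) :
    lam * KLdiv p q ≤ lam * KLdiv pt q + rmax := by
  have hcomp := isMinOn_iff.mp hmin pt hpt
  rw [mdObj, mdObj, KLdiv_self, mul_zero, add_zero] at hcomp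
  have hreward_p : ∑ a, Q a * p a ≤ rmax := sum_mul_le_of_mem_probSimplex hp fun a => (hQ a).2
  have hreward_pt : 0 ≤ ∑ a, Q a * pt a :=
    sum_nonneg fun a _ => mul_nonneg (hQ a).1 (hpt.1 a)
  have hprox : 0 ≤ 1 / eta * KLdiv p pt :=
    mul_nonneg (by positivity) (KLdiv_nonneg hp hpt hptpos)
  simp only [neg_mul, sum_neg_distrib] at hcomp
  linarith

end

/-- **KL boundedness of the NPG iterates.**  Let `q` be a strictly positive distribution on a
finite set `A` and `λ, η > 0`.  Define `p¹ = q` and, for `t ≥ 1`, let `p^{t+1}` be a minimizer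
over the simplex of `p ↦ ⟨−Qᵗ, p⟩ + λ·KL(p‖q) + (1/η)·KL(p‖pᵗ)`, where `0 ≤ Qᵗ(a) ≤ r_max`.
Then for every `t ≥ 1`, `KL(pᵗ‖q) ≤ r_max·(t−1)/λ`. -/
theorem npg_kl_bound {A : Type*} [Fintype A]
    (q : A → ℝ) (hq : q ∈ probSimplex A) (hqpos : ∀ a, 0 < q a)
    (lam eta rmax : ℝ) (hlam : 0 < lam) (heta : 0 < eta)
    (Q : ℕ → A → ℝ) (hQ : ∀ t a, Q t a ∈ Set.Icc (0 : ℝ) rmax)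
    (p : ℕ → A → ℝ) (hp1 : p 1 = q)
    (hupd : ∀ t, 1 ≤ t →
      p (t + 1) ∈ probSimplex A ∧
      ∀ p' ∈ probSimplex A,
        mdObj (Q t) q (p t) lam eta (p (t + 1)) ≤ mdObj (Q t) q (p t) lam eta p') :
    ∀ t, 1 ≤ t → KLdiv (p t) q ≤ rmax * ((t : ℝ) - 1) / lam := by
  have hmin : ∀ t, 1 ≤ t → IsMinOn (mdObj (Q t) q (p t) lam eta) (probSimplex A) (p (t + 1)) :=
    fun t ht => isMinOn_iff.mpr (hupd t ht).2
  have hpos : ∀ t, 1 ≤ t → p t ∈ probSimplex A ∧ ∀ a, 0 < p t a := by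
    intro t ht
    induction t, ht using Nat.le_induction with
    | base => exact hp1 ▸ ⟨hq, hqpos⟩
    | succ t ht ih =>
      exact ⟨(hupd t ht).1,
        pos_of_isMinOn_mdObj hlam.le heta hqpos ih.2 (hupd t ht).1 (hmin t ht)⟩
  have hbound : ∀ t, 1 ≤ t → lam * KLdiv (p t) q ≤ rmax * ((t : ℝ) - 1) := by
    intro t ht
    induction t, ht using Nat.le_induction with
    | base => simp [hp1, KLdiv_self]
    | succ t ht ih =>
      have hstep := KLdiv_le_of_isMinOn_mdObj heta (hQ t) (hpos t ht).1 (hpos t ht).2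
        (hupd t ht).1 (hmin t ht)
      push_cast
      linarith
  intro t ht
  rw [le_div_iff₀ hlam, mul_comm]
  exact hbound t ht
end

section
/- (MLE reward estimation guarantee.) Under the reward realizability assumption, with probability at least 1−δ over the M i.i.d. labeled preference pairs, the maximum-likelihood estimate r̂ satisfies E_{τ^0,τ^1 i.i.d. ∼ d^{π_SFT}}[|r*(τ^0) − r*(τ^1) − r̂(τ^0) + r̂(τ^1)|²] ≤ c₁·κ²·log(|R|/δ)/M for a universal constant c₁ > 0. -/
/-!
Let `q_r` be the law of one labeled pair when labels follow the reward `r`, and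
`ρ(r) = ∑ √(q_r · q_{r*})` its Bhattacharyya coefficient with the true law. The square-root
likelihood ratio `X_r = ∏ₘ √(P_r(oₘ) / P_{r*}(oₘ))` has expectation `ρ(r)^M` under the data law,
so by Markov's inequality and a union bound over `R`, with probability at least `1 - δ` every
`r ∈ R` has `X_r < (|R|/δ) ρ(r)^M`. The MLE has `X_r̂ ≥ 1`, hence
`M (1 - ρ(r̂)) ≤ -M log ρ(r̂) < log (|R|/δ)`. Finally the mean value theorem with `Φ' ≥ 1/κ` and
the Bernoulli bound `(p - q)² ≤ 8 (1 - √(pq) - √((1-p)(1-q)))` give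
`E |Δr* - Δr̂|² ≤ 8 κ² (1 - ρ(r̂))`, so `c₁ = 8` works.
-/

open Finset

/-- Probability that the preference model induced by the reward (return) function `r` and link
function `Φ` assigns to the observed label of the datum `(τ⁰, τ¹, o)`:
`P_r(o=1|τ⁰,τ¹) = Φ(r(τ¹) − r(τ⁰))`. -/
noncomputable def obsProb {T : Type*} (Φ : ℝ → ℝ) (r : T → ℝ) (x : T × T × Bool) : ℝ :=
  if x.2.2 then Φ (r x.2.1 - r x.1) else 1 - Φ (r x.2.1 - r x.1)

theorem sum_pi_prod_eq_sum_pow {α : Type*} [Fintype α] (f : α → ℝ) (n : ℕ) :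
    ∑ p : Fin n → α, ∏ i, f (p i) = (∑ a, f a) ^ n := by
  rw [sum_pow', Fintype.piFinset_univ]

theorem sqrt_mul_mul_mul_self_of_nonneg {c : ℝ} (hc : 0 ≤ c) (p q : ℝ) :
    √(c * p * (c * q)) = c * √(p * q) := by
  rw [mul_mul_mul_comm, Real.sqrt_mul (mul_self_nonneg c), Real.sqrt_mul_self hc]

noncomputable def bhattacharyyaCoeff {α : Type*} [Fintype α] (p q : α → ℝ) : ℝ :=
  ∑ x, √(p x * q x)

theorem sq_sub_le_eight_mul_one_sub_bhattacharyya {p q : ℝ} (hp : p ∈ Set.Icc (0 : ℝ) 1)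
    (hq : q ∈ Set.Icc (0 : ℝ) 1) :
    (p - q) ^ 2 ≤ 8 * (1 - (√(p * q) + √((1 - p) * (1 - q)))) := by
  obtain ⟨hp0, hp1⟩ := hp
  obtain ⟨hq0, hq1⟩ := hq
  rw [Real.sqrt_mul hp0, Real.sqrt_mul (by linarith)]
  have ha := Real.sq_sqrt hp0
  have hb := Real.sq_sqrt hq0
  have hc := Real.sq_sqrt (sub_nonneg.2 hp1)
  have hd := Real.sq_sqrt (sub_nonneg.2 hq1)
  -- `p - q = (√p - √q)(√p + √q)` with `(√p + √q)² ≤ 4`, and `1 - BC` is half the sum of the two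
  -- squared differences of square roots
  have h4 : (√p + √q) ^ 2 ≤ 4 := by nlinarith [Real.sqrt_nonneg p, Real.sqrt_nonneg q]
  nlinarith [sq_nonneg (√p - √q), sq_nonneg (√(1 - p) - √(1 - q)),
    mul_nonneg (sq_nonneg (√p - √q)) (sub_nonneg.2 h4),
    mul_nonneg (mul_nonneg (Real.sqrt_nonneg p) (Real.sqrt_nonneg q))
      (sq_nonneg (√(1 - p) - √(1 - q)))]

theorem Convex.mul_abs_sub_le_abs_image_sub {D : Set ℝ} (hD : Convex ℝ D) {f : ℝ → ℝ}
    (hf : ContinuousOn f D) (hf' : DifferentiableOn ℝ f (interior D)) {C : ℝ} (hC : 0 ≤ C)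
    (hf'_ge : ∀ x ∈ interior D, C ≤ deriv f x) {x y : ℝ} (hx : x ∈ D) (hy : y ∈ D) :
    C * |y - x| ≤ |f y - f x| := by
  wlog hxy : x ≤ y generalizing x y
  · rw [abs_sub_comm, abs_sub_comm (f y)]; exact this hy hx (le_of_not_ge hxy)
  have h := hD.mul_sub_le_image_sub_of_le_deriv hf hf' hf'_ge x hx y hy hxy
  rwa [abs_of_nonneg (sub_nonneg.2 hxy), abs_of_nonneg ((mul_nonneg hC (sub_nonneg.2 hxy)).trans h)]

theorem one_sub_lt_log_div_of_one_lt_mul_pow {A g : ℝ} (hg : 0 < g) {M : ℕ} (hM : 0 < M)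
    (h : 1 < A * g ^ M) : 1 - g < Real.log A / M := by
  have hA : 0 < A := pos_of_mul_pos_left (one_pos.trans h) (by positivity)
  have hlog : 0 < Real.log A + M * Real.log g := by
    rw [← Real.log_pow, ← Real.log_mul hA.ne' (by positivity)]
    exact Real.log_pos h
  rw [lt_div_iff₀ (by exact_mod_cast hM)]
  nlinarith [Real.log_le_sub_one_of_pos hg, (Nat.cast_pos.2 hM : (0 : ℝ) < M)]

section FiniteProbability

variable {Ω ι : Type*} [Fintype Ω] {P : Ω → ℝ}

theorem mul_sum_filter_le_sum_mul (hP : ∀ ω, 0 ≤ P ω) {X : Ω → ℝ} (hX : ∀ ω, 0 ≤ X ω) (a : ℝ)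
    [DecidablePred fun ω => a ≤ X ω] :
    a * ∑ ω ∈ univ.filter (fun ω => a ≤ X ω), P ω ≤ ∑ ω, P ω * X ω :=
  calc a * ∑ ω ∈ univ.filter (fun ω => a ≤ X ω), P ω
      ≤ ∑ ω ∈ univ.filter (fun ω => a ≤ X ω), P ω * X ω := by
        rw [mul_sum]
        exact sum_le_sum fun ω hω => by
          rw [mul_comm]; exact mul_le_mul_of_nonneg_left (mem_filter.1 hω).2 (hP ω)
    _ ≤ ∑ ω, P ω * X ω :=
        sum_le_sum_of_subset_of_nonneg (filter_subset _ _) fun ω _ _ => mul_nonneg (hP ω) (hX ω)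

theorem sum_filter_exists_le_sum_sum_filter (hP : ∀ ω, 0 ≤ P ω) (s : Finset ι)
    (p : ι → Ω → Prop) [∀ i, DecidablePred (p i)] [DecidablePred fun ω => ∃ i ∈ s, p i ω] :
    ∑ ω ∈ univ.filter (fun ω => ∃ i ∈ s, p i ω), P ω ≤
      ∑ i ∈ s, ∑ ω ∈ univ.filter (p i), P ω := by
  have hind : ∀ ω i, 0 ≤ if p i ω then P ω else 0 := fun ω i => by
    split_ifs <;> simp [hP ω]
  simp_rw [sum_filter]
  rw [sum_comm]
  refine sum_le_sum fun ω _ => ?_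
  split_ifs with h
  · obtain ⟨i, hi, hpi⟩ := h
    simpa [hpi] using single_le_sum (fun j _ => hind ω j) hi
  · exact sum_nonneg fun i _ => hind ω i

theorem one_sub_le_sum_filter_forall_lt (hP : ∀ ω, 0 ≤ P ω) (hP1 : ∑ ω, P ω = 1)
    (s : Finset ι) {X : ι → Ω → ℝ} (hX : ∀ i ω, 0 ≤ X i ω)
    (hE : ∀ i ∈ s, 0 < ∑ ω, P ω * X i ω) {δ : ℝ} (hδ : 0 < δ) :
    1 - δ ≤ ∑ ω ∈ univ.filter
      (fun ω => ∀ i ∈ s, X i ω < #s / δ * ∑ ω', P ω' * X i ω'), P ω := by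
  classical
  set a : ι → ℝ := fun i => #s / δ * ∑ ω', P ω' * X i ω'
  have hmarkov : ∀ i ∈ s, ∑ ω ∈ univ.filter (fun ω => a i ≤ X i ω), P ω ≤ δ / #s := by
    intro i hi
    have hs : (0 : ℝ) < #s := by exact_mod_cast card_pos.2 ⟨i, hi⟩
    have h := mul_sum_filter_le_sum_mul hP (hX i) (a i)
    rw [← le_div_iff₀' (mul_pos (div_pos hs hδ) (hE i hi)), div_mul_cancel_right₀ (hE i hi).ne',
      inv_div] at h
    exact h
  have hbad : ∑ ω ∈ univ.filter (fun ω => ∃ i ∈ s, a i ≤ X i ω), P ω ≤ δ :=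
    calc _ ≤ ∑ i ∈ s, ∑ ω ∈ univ.filter (fun ω => a i ≤ X i ω), P ω :=
          sum_filter_exists_le_sum_sum_filter hP s _
      _ ≤ ∑ _i ∈ s, δ / #s := sum_le_sum hmarkov
      _ ≤ δ := by
          rw [sum_const, nsmul_eq_mul]
          rcases s.eq_empty_or_nonempty with rfl | hs
          · simp [hδ.le]
          · rw [mul_div_cancel₀ _ (by exact_mod_cast hs.card_pos.ne')]
  have hsplit := sum_filter_add_sum_filter_not univ (fun ω => ∀ i ∈ s, X i ω < a i) P
  simp only [not_forall, not_lt, exists_prop] at hsplit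
  linarith

end FiniteProbability

section PreferenceModel

variable {T : Type*} {d : T → ℝ} {Φ : ℝ → ℝ}

noncomputable def pairLaw (d : T → ℝ) (Φ : ℝ → ℝ) (r : T → ℝ) (x : T × T × Bool) : ℝ :=
  d x.1 * d x.2.1 * obsProb Φ r x

noncomputable def sqrtLikelihoodRatio (Φ : ℝ → ℝ) (r r' : T → ℝ) {M : ℕ}
    (data : Fin M → T × T × Bool) : ℝ :=
  ∏ m, √(obsProb Φ r (data m) / obsProb Φ r' (data m))

theorem obsProb_mem_Ioo (hΦ : ∀ x, Φ x ∈ Set.Ioo (0 : ℝ) 1) (r : T → ℝ) (x : T × T × Bool) :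
    obsProb Φ r x ∈ Set.Ioo (0 : ℝ) 1 := by
  have h := hΦ (r x.2.1 - r x.1)
  unfold obsProb
  split_ifs
  · exact h
  · constructor <;> linarith [h.1, h.2]

theorem pairLaw_nonneg (hd0 : ∀ τ, 0 ≤ d τ) (hΦ : ∀ x, Φ x ∈ Set.Ioo (0 : ℝ) 1) (r : T → ℝ)
    (x : T × T × Bool) : 0 ≤ pairLaw d Φ r x :=
  mul_nonneg (mul_nonneg (hd0 _) (hd0 _)) (obsProb_mem_Ioo hΦ r x).1.le

theorem sum_pairLaw [Fintype T] (hd1 : ∑ τ, d τ = 1) (r : T → ℝ) :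
    ∑ x, pairLaw d Φ r x = 1 := by
  simp only [Fintype.sum_prod_type, Fintype.sum_bool, pairLaw, obsProb, if_true,
    Bool.false_eq_true, if_false, add_sub_cancel, mul_one, ← mul_sum, hd1]

theorem pairLaw_mul_sqrt_div (hd0 : ∀ τ, 0 ≤ d τ) (hΦ : ∀ x, Φ x ∈ Set.Ioo (0 : ℝ) 1)
    (r r' : T → ℝ) (x : T × T × Bool) :
    pairLaw d Φ r' x * √(obsProb Φ r x / obsProb Φ r' x) =
      √(pairLaw d Φ r x * pairLaw d Φ r' x) := by
  have hq' := (obsProb_mem_Ioo hΦ r' x).1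
  rw [pairLaw, pairLaw, sqrt_mul_mul_mul_self_of_nonneg (mul_nonneg (hd0 _) (hd0 _)), mul_assoc,
    ← Real.sqrt_sq hq'.le, ← Real.sqrt_mul (sq_nonneg _), Real.sqrt_sq hq'.le]
  congr 2
  field_simp

theorem sum_prod_pairLaw_mul_sqrtLikelihoodRatio [Fintype T] (hd0 : ∀ τ, 0 ≤ d τ)
    (hΦ : ∀ x, Φ x ∈ Set.Ioo (0 : ℝ) 1) (r r' : T → ℝ) (M : ℕ) :
    ∑ data : Fin M → T × T × Bool,
        (∏ m, pairLaw d Φ r' (data m)) * sqrtLikelihoodRatio Φ r r' data =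
      bhattacharyyaCoeff (pairLaw d Φ r) (pairLaw d Φ r') ^ M := by
  simp only [sqrtLikelihoodRatio, ← prod_mul_distrib, pairLaw_mul_sqrt_div hd0 hΦ]
  exact sum_pi_prod_eq_sum_pow (fun x => √(pairLaw d Φ r x * pairLaw d Φ r' x)) M

theorem bhattacharyyaCoeff_pairLaw_pos [Fintype T] (hd0 : ∀ τ, 0 ≤ d τ) (hd1 : ∑ τ, d τ = 1)
    (hΦ : ∀ x, Φ x ∈ Set.Ioo (0 : ℝ) 1) (r r' : T → ℝ) :
    0 < bhattacharyyaCoeff (pairLaw d Φ r) (pairLaw d Φ r') := by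
  obtain ⟨τ, -, hτ0⟩ := exists_ne_zero_of_sum_ne_zero (hd1 ▸ one_ne_zero : ∑ τ, d τ ≠ 0)
  have hτ := (hd0 τ).lt_of_ne' hτ0
  have hx : ∀ r, 0 < pairLaw d Φ r (τ, τ, true) := fun r =>
    mul_pos (mul_pos hτ hτ) (obsProb_mem_Ioo hΦ r _).1
  exact sum_pos' (fun x _ => Real.sqrt_nonneg _)
    ⟨(τ, τ, true), mem_univ _, Real.sqrt_pos.2 (mul_pos (hx r) (hx r'))⟩

theorem one_le_sqrtLikelihoodRatio (hΦ : ∀ x, Φ x ∈ Set.Ioo (0 : ℝ) 1) {r r' : T → ℝ}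
    {M : ℕ} {data : Fin M → T × T × Bool}
    (hmle : ∑ m, -Real.log (obsProb Φ r (data m)) ≤ ∑ m, -Real.log (obsProb Φ r' (data m))) :
    1 ≤ sqrtLikelihoodRatio Φ r r' data := by
  have hq : ∀ r m, 0 < obsProb Φ r (data m) := fun r m => (obsProb_mem_Ioo hΦ r _).1
  have hlik : ∏ m, obsProb Φ r' (data m) ≤ ∏ m, obsProb Φ r (data m) := by
    rw [← Real.log_le_log_iff (prod_pos fun m _ => hq r' m) (prod_pos fun m _ => hq r m),
      Real.log_prod fun m _ => (hq r' m).ne', Real.log_prod fun m _ => (hq r m).ne']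
    simpa only [sum_neg_distrib, neg_le_neg_iff] using hmle
  rw [sqrtLikelihoodRatio, ← Real.sqrt_prod _ fun m _ => div_nonneg (hq r m).le (hq r' m).le,
    prod_div_distrib, Real.one_le_sqrt, one_le_div (prod_pos fun m _ => hq r' m)]
  exact hlik

theorem bhattacharyyaCoeff_pairLaw_eq [Fintype T] (hd0 : ∀ τ, 0 ≤ d τ) (r r' : T → ℝ) :
    bhattacharyyaCoeff (pairLaw d Φ r) (pairLaw d Φ r') =
      ∑ τ0, ∑ τ1, d τ0 * d τ1 *
        (√(Φ (r τ1 - r τ0) * Φ (r' τ1 - r' τ0)) +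
          √((1 - Φ (r τ1 - r τ0)) * (1 - Φ (r' τ1 - r' τ0)))) := by
  simp only [bhattacharyyaCoeff, pairLaw, Fintype.sum_prod_type, Fintype.sum_bool, obsProb,
    if_true, Bool.false_eq_true, if_false,
    sqrt_mul_mul_mul_self_of_nonneg (mul_nonneg (hd0 _) (hd0 _)), mul_add]

theorem sq_sub_le_of_inv_le_deriv {κ R : ℝ} (hκ : 0 < κ) (hdiff : Differentiable ℝ Φ)
    (hΦ : ∀ x, Φ x ∈ Set.Ioo (0 : ℝ) 1) (hderiv : ∀ x ∈ Set.Icc (-R) R, κ⁻¹ ≤ deriv Φ x)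
    {a b : ℝ} (ha : a ∈ Set.Icc (-R) R) (hb : b ∈ Set.Icc (-R) R) :
    (a - b) ^ 2 ≤ 8 * κ ^ 2 * (1 - (√(Φ a * Φ b) + √((1 - Φ a) * (1 - Φ b)))) := by
  have hlip : κ⁻¹ * |a - b| ≤ |Φ a - Φ b| :=
    (convex_Icc (-R) R).mul_abs_sub_le_abs_image_sub hdiff.continuous.continuousOn
      hdiff.differentiableOn (inv_nonneg.2 hκ.le)
      (fun x hx => hderiv x (interior_subset hx)) hb ha
  have hsq : (a - b) ^ 2 ≤ κ ^ 2 * (Φ a - Φ b) ^ 2 := by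
    rw [inv_mul_le_iff₀ hκ] at hlip
    simpa only [sq_abs, mul_pow] using pow_le_pow_left₀ (abs_nonneg _) hlip 2
  have hbc := sq_sub_le_eight_mul_one_sub_bhattacharyya (Set.Ioo_subset_Icc_self (hΦ a))
    (Set.Ioo_subset_Icc_self (hΦ b))
  nlinarith [sq_nonneg κ]

theorem sum_sum_mul_sq_sub_le_one_sub_bhattacharyyaCoeff [Fintype T] (hd0 : ∀ τ, 0 ≤ d τ)
    (hd1 : ∑ τ, d τ = 1) {κ R : ℝ} (hκ : 0 < κ) (hdiff : Differentiable ℝ Φ)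
    (hΦ : ∀ x, Φ x ∈ Set.Ioo (0 : ℝ) 1) (hderiv : ∀ x ∈ Set.Icc (-R) R, κ⁻¹ ≤ deriv Φ x)
    {r r' : T → ℝ} (hr : ∀ τ, r τ ∈ Set.Icc 0 R) (hr' : ∀ τ, r' τ ∈ Set.Icc 0 R) :
    ∑ τ0, ∑ τ1, d τ0 * d τ1 * |r' τ0 - r' τ1 - r τ0 + r τ1| ^ 2 ≤
      8 * κ ^ 2 * (1 - bhattacharyyaCoeff (pairLaw d Φ r) (pairLaw d Φ r')) := by
  have hgap : ∀ (f : T → ℝ), (∀ τ, f τ ∈ Set.Icc 0 R) → ∀ τ0 τ1, f τ1 - f τ0 ∈ Set.Icc (-R) R :=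
    fun f hf τ0 τ1 => ⟨by linarith [(hf τ0).2, (hf τ1).1], by linarith [(hf τ0).1, (hf τ1).2]⟩
  rw [bhattacharyyaCoeff_pairLaw_eq hd0]
  calc _ ≤ ∑ τ0, ∑ τ1, 8 * κ ^ 2 * (d τ0 * d τ1 - d τ0 * d τ1 *
          (√(Φ (r τ1 - r τ0) * Φ (r' τ1 - r' τ0)) +
            √((1 - Φ (r τ1 - r τ0)) * (1 - Φ (r' τ1 - r' τ0))))) := by
        refine sum_le_sum fun τ0 _ => sum_le_sum fun τ1 _ => ?_
        have h := sq_sub_le_of_inv_le_deriv hκ hdiff hΦ hderiv (hgap r hr τ0 τ1)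
          (hgap r' hr' τ0 τ1)
        rw [sq_abs, show r' τ0 - r' τ1 - r τ0 + r τ1 = r τ1 - r τ0 - (r' τ1 - r' τ0) by ring]
        nlinarith [mul_nonneg (hd0 τ0) (hd0 τ1)]
    _ = _ := by simp only [← mul_sum, sum_sub_distrib, ← sum_mul, hd1, one_mul]

end PreferenceModel

/-- **MLE reward estimation guarantee.**  There is a universal constant `c₁ > 0` such that,
under the reward realizability assumption (`r* ∈ R`, all returns in `[0, r_max]`), for any link
function `Φ` (monotonically increasing, differentiable, values in `(0,1)`) with
`Φ'(x) ≥ 1/κ` on `[−r_max, r_max]`, with probability at least `1 − δ` over the `M` i.i.d.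
labeled preference pairs, the maximum-likelihood estimate `r̂` satisfies
`E_{τ⁰,τ¹∼d_SFT}[|r*(τ⁰) − r*(τ¹) − r̂(τ⁰) + r̂(τ¹)|²] ≤ c₁·κ²·log(|R|/δ)/M`. -/
theorem mle_reward_estimation :
    ∃ c₁ : ℝ, 0 < c₁ ∧
      ∀ (T : Type) (_ : Fintype T) (dSFT : T → ℝ),
        (∀ τ, 0 ≤ dSFT τ) → (∑ τ, dSFT τ = 1) →
        ∀ (rmax κ : ℝ), 0 ≤ rmax → 0 < κ →
        ∀ (Φ : ℝ → ℝ), StrictMono Φ → Differentiable ℝ Φ →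
          (∀ x, Φ x ∈ Set.Ioo (0 : ℝ) 1) →
          (∀ x ∈ Set.Icc (-rmax) rmax, κ⁻¹ ≤ deriv Φ x) →
        ∀ (Rcls : Finset (T → ℝ)) (rstar : T → ℝ), rstar ∈ Rcls →
          (∀ r ∈ Rcls, ∀ τ, r τ ∈ Set.Icc (0 : ℝ) rmax) →
        ∀ (M : ℕ), 0 < M →
        ∀ (δ : ℝ), δ ∈ Set.Ioc (0 : ℝ) 1 →
        ∀ (rhat : (Fin M → T × T × Bool) → T → ℝ),
          (∀ data, rhat data ∈ Rcls ∧
            ∀ r ∈ Rcls,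
              (∑ m, -Real.log (obsProb Φ (rhat data) (data m)))
                ≤ ∑ m, -Real.log (obsProb Φ r (data m))) →
        (1 : ℝ) - δ ≤
          ∑ data ∈ Finset.univ.filter
            (fun data : Fin M → T × T × Bool =>
              ∑ τ0, ∑ τ1, dSFT τ0 * dSFT τ1 *
                  |rstar τ0 - rstar τ1 - rhat data τ0 + rhat data τ1| ^ 2
                ≤ c₁ * κ ^ 2 * Real.log (Rcls.card / δ) / M),
            ∏ m, dSFT (data m).1 * dSFT (data m).2.1 * obsProb Φ rstar (data m) := by
  classical
  refine ⟨8, by norm_num, fun T _ d hd0 hd1 rmax κ _ hκ Φ _ hdiff hΦ hderiv R rstar hstar hR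
    M hM δ hδ rhat hrhat => ?_⟩
  set P : (Fin M → T × T × Bool) → ℝ := fun data => ∏ m, pairLaw d Φ rstar (data m)
  have hP0 : ∀ data, 0 ≤ P data := fun data => prod_nonneg fun m _ => pairLaw_nonneg hd0 hΦ _ _
  have hP1 : ∑ data, P data = 1 := by
    rw [sum_pi_prod_eq_sum_pow, sum_pairLaw hd1, one_pow]
  have hE : ∀ r, ∑ data, P data * sqrtLikelihoodRatio Φ r rstar data =
      bhattacharyyaCoeff (pairLaw d Φ r) (pairLaw d Φ rstar) ^ M :=
    fun r => sum_prod_pairLaw_mul_sqrtLikelihoodRatio hd0 hΦ r rstar M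
  have hBC := bhattacharyyaCoeff_pairLaw_pos (r' := rstar) hd0 hd1 hΦ
  refine (one_sub_le_sum_filter_forall_lt hP0 hP1 R
    (fun r data => prod_nonneg fun m _ => Real.sqrt_nonneg _)
    (fun r _ => (hE r).symm ▸ pow_pos (hBC r) M) hδ.1).trans
    (sum_le_sum_of_subset_of_nonneg (fun data hdata => ?_) fun data _ _ => hP0 data)
  obtain ⟨hmem, hmle⟩ := hrhat data
  have hlr : 1 < #R / δ * bhattacharyyaCoeff (pairLaw d Φ (rhat data)) (pairLaw d Φ rstar) ^ M :=
    (hE _ ▸ (one_le_sqrtLikelihoodRatio hΦ (hmle rstar hstar)).trans_lt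
      ((mem_filter.1 hdata).2 _ hmem))
  refine mem_filter.2 ⟨mem_univ _, ?_⟩
  calc _ ≤ 8 * κ ^ 2 * (1 - bhattacharyyaCoeff (pairLaw d Φ (rhat data)) (pairLaw d Φ rstar)) :=
        sum_sum_mul_sq_sub_le_one_sub_bhattacharyyaCoeff hd0 hd1 hκ hdiff hΦ hderiv
          (hR _ hmem) (hR _ hstar)
    _ ≤ 8 * κ ^ 2 * (Real.log (#R / δ) / M) := by
        gcongr
        exact (one_sub_lt_log_div_of_one_lt_mul_pow (hBC _) hM hlr).le
    _ = _ := by ring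
end

section
/- (Telescoped mirror descent regret bound.) Let A be a finite set, q a strictly positive probability distribution on A, and λ, η > 0. Define p¹ = q and, for t = 1,…,T, p^{t+1} = argmin_{p∈Δ(A)} ⟨−Q^t, p⟩ + λ·KL(p‖q) + (1/η)·KL(p‖p^t), where each Q^t : A → [0, r_max]. Then for every p* ∈ Δ(A): Σ_{t=1}^T (η·⟨Q^t, p* − p^t⟩ + ηλ·KL(p^t‖q) − ηλ·KL(p*‖q)) ≤ KL(p*‖q) + T·η²·r_max²/2. -/
open Finset

/-! ### Auxiliary lemmas -/

lemma pt_lemma (x y : ℝ) (hx : 0 ≤ x) (hy : 0 < y) :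
    (Real.sqrt x - Real.sqrt y)^2 ≤ x * Real.log (x/y) - x + y := by
  rcases eq_or_lt_of_le hx with h | hxp
  · simp [← h, Real.sq_sqrt hy.le]
  · have sx := Real.sqrt_pos.mpr hxp
    have sy := Real.sqrt_pos.mpr hy
    have h1 : Real.log (Real.sqrt y / Real.sqrt x) ≤ Real.sqrt y / Real.sqrt x - 1 :=
      Real.log_le_sub_one_of_pos (by positivity)
    rw [Real.log_div sy.ne' sx.ne', Real.log_sqrt hy.le, Real.log_sqrt hxp.le] at h1
    rw [Real.log_div hxp.ne' hy.ne']
    have e1 : Real.sqrt x ^ 2 = x := Real.sq_sqrt hxp.le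
    have e2 : Real.sqrt y ^ 2 = y := Real.sq_sqrt hy.le
    have h2 : Real.sqrt x * (Real.sqrt y / Real.sqrt x) = Real.sqrt y := by
      field_simp
    nlinarith [mul_le_mul_of_nonneg_left h1 (le_of_lt hxp),
      mul_pos sx sy, sq_nonneg (Real.sqrt x - Real.sqrt y)]

lemma kl_ge_hellinger {A : Type*} [Fintype A] (p u : A → ℝ)
    (hp : p ∈ probSimplex A) (hu : u ∈ probSimplex A) (hupos : ∀ a, 0 < u a) :
    ∑ a, (Real.sqrt (p a) - Real.sqrt (u a))^2 ≤ KLdiv p u := by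
  have h : ∑ a, (Real.sqrt (p a) - Real.sqrt (u a))^2
      ≤ ∑ a, (p a * Real.log (p a / u a) - p a + u a) :=
    Finset.sum_le_sum fun a _ => pt_lemma _ _ (hp.1 a) (hupos a)
  rw [KLdiv]
  have : ∑ a, (p a * Real.log (p a / u a) - p a + u a)
      = ∑ a, p a * Real.log (p a / u a) - ∑ a, p a + ∑ a, u a := by
    rw [Finset.sum_add_distrib, Finset.sum_sub_distrib]
  rw [this, hp.2, hu.2] at h
  linarith

lemma kl_nonneg {A : Type*} [Fintype A] (p u : A → ℝ)
    (hp : p ∈ probSimplex A) (hu : u ∈ probSimplex A) (hupos : ∀ a, 0 < u a) :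
    0 ≤ KLdiv p u := by
  refine le_trans ?_ (kl_ge_hellinger p u hp hu hupos)
  exact Finset.sum_nonneg fun a _ => sq_nonneg _

lemma kl_self {A : Type*} [Fintype A] (p : A → ℝ) : KLdiv p p = 0 := by
  rw [KLdiv]
  refine Finset.sum_eq_zero fun a _ => ?_
  rcases eq_or_ne (p a) 0 with h | h
  · simp [h]
  · simp [div_self h]

lemma eq_of_kl_le_zero {A : Type*} [Fintype A] (p u : A → ℝ)
    (hp : p ∈ probSimplex A) (hu : u ∈ probSimplex A) (hupos : ∀ a, 0 < u a)
    (hkl : KLdiv p u ≤ 0) : p = u := by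
  have h := kl_ge_hellinger p u hp hu hupos
  have h0 : ∑ a, (Real.sqrt (p a) - Real.sqrt (u a))^2 = 0 := by
    have := Finset.sum_nonneg (s := Finset.univ)
      (f := fun a => (Real.sqrt (p a) - Real.sqrt (u a))^2) (fun a _ => sq_nonneg _)
    linarith
  funext a
  have := (Finset.sum_eq_zero_iff_of_nonneg (fun a _ => sq_nonneg _)).mp h0 a (Finset.mem_univ a)
  have hs : Real.sqrt (p a) = Real.sqrt (u a) := by
    nlinarith [sq_nonneg (Real.sqrt (p a) - Real.sqrt (u a))]
  have := congrArg (· ^ 2) hs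
  simpa [Real.sq_sqrt (hp.1 a), Real.sq_sqrt (hupos a).le] using this

/-! ### The explicit minimizer -/

noncomputable def mdw {A : Type*} [Fintype A] (Qt q pt : A → ℝ) (lam eta : ℝ) (a : A) : ℝ :=
  Real.exp ((Qt a + lam * Real.log (q a) + (1/eta) * Real.log (pt a)) / (lam + 1/eta))

noncomputable def mdZ {A : Type*} [Fintype A] (Qt q pt : A → ℝ) (lam eta : ℝ) : ℝ :=
  ∑ a, mdw Qt q pt lam eta a

noncomputable def mdU {A : Type*} [Fintype A] (Qt q pt : A → ℝ) (lam eta : ℝ) (a : A) : ℝ :=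
  mdw Qt q pt lam eta a / mdZ Qt q pt lam eta

lemma mdZ_pos {A : Type*} [Fintype A] [Nonempty A] (Qt q pt : A → ℝ) (lam eta : ℝ) :
    0 < mdZ Qt q pt lam eta :=
  Finset.sum_pos (fun a _ => Real.exp_pos _) Finset.univ_nonempty

lemma mdU_pos {A : Type*} [Fintype A] [Nonempty A] (Qt q pt : A → ℝ) (lam eta : ℝ) (a : A) :
    0 < mdU Qt q pt lam eta a :=
  div_pos (Real.exp_pos _) (mdZ_pos Qt q pt lam eta)

lemma mdU_simplex {A : Type*} [Fintype A] [Nonempty A] (Qt q pt : A → ℝ) (lam eta : ℝ) :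
    mdU Qt q pt lam eta ∈ probSimplex A := by
  constructor
  · exact fun a => (mdU_pos Qt q pt lam eta a).le
  · unfold mdU
    rw [← Finset.sum_div, div_eq_one_iff_eq (mdZ_pos Qt q pt lam eta).ne']
    rfl

lemma md_identity {A : Type*} [Fintype A] [Nonempty A] (Qt q pt : A → ℝ)
    (hqpos : ∀ a, 0 < q a) (hptpos : ∀ a, 0 < pt a)
    (lam eta : ℝ) (hlam : 0 < lam) (heta : 0 < eta)
    (p : A → ℝ) (hp : p ∈ probSimplex A) :
    mdObj Qt q pt lam eta p
      = (lam + 1/eta) * KLdiv p (mdU Qt q pt lam eta)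
        - (lam + 1/eta) * Real.log (mdZ Qt q pt lam eta) := by
  have hc : 0 < lam + 1/eta := by positivity
  have hZ := mdZ_pos Qt q pt lam eta
  rw [mdObj, KLdiv, KLdiv, KLdiv, Finset.mul_sum, Finset.mul_sum, Finset.mul_sum,
    ← Finset.sum_add_distrib, ← Finset.sum_add_distrib]
  have hrhs : (lam + 1/eta) * Real.log (mdZ Qt q pt lam eta)
      = ∑ a, p a * ((lam + 1/eta) * Real.log (mdZ Qt q pt lam eta)) := by
    rw [← Finset.sum_mul, hp.2, one_mul]
  rw [hrhs, ← Finset.sum_sub_distrib]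
  refine Finset.sum_congr rfl fun a _ => ?_
  rcases eq_or_lt_of_le (hp.1 a) with h | hpa
  · simp [← h]
  · have hU := mdU_pos Qt q pt lam eta a
    rw [Real.log_div hpa.ne' (hqpos a).ne', Real.log_div hpa.ne' (hptpos a).ne',
      Real.log_div hpa.ne' hU.ne']
    have hlogU : Real.log (mdU Qt q pt lam eta a)
        = (Qt a + lam * Real.log (q a) + (1/eta) * Real.log (pt a)) / (lam + 1/eta)
          - Real.log (mdZ Qt q pt lam eta) := by
      rw [mdU, mdw, Real.log_div (Real.exp_pos _).ne' hZ.ne', Real.log_exp]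
    rw [hlogU]
    field_simp
    ring

lemma md_step {A : Type*} [Fintype A] [Nonempty A] (Qt q pt pn : A → ℝ)
    (hqpos : ∀ a, 0 < q a) (hptpos : ∀ a, 0 < pt a)
    (lam eta : ℝ) (hlam : 0 < lam) (heta : 0 < eta)
    (hpn : pn ∈ probSimplex A)
    (hmin : ∀ p' ∈ probSimplex A, mdObj Qt q pt lam eta pn ≤ mdObj Qt q pt lam eta p') :
    (∀ a, 0 < pn a) ∧ ∀ pstar ∈ probSimplex A,
      mdObj Qt q pt lam eta pstar
        = mdObj Qt q pt lam eta pn + (lam + 1/eta) * KLdiv pstar pn := by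
  have hc : 0 < lam + 1/eta := by positivity
  set u := mdU Qt q pt lam eta with hu
  have hus := mdU_simplex Qt q pt lam eta
  have huspos := mdU_pos Qt q pt lam eta
  have hIn := md_identity Qt q pt hqpos hptpos lam eta hlam heta pn hpn
  have hIu := md_identity Qt q pt hqpos hptpos lam eta hlam heta u hus
  rw [kl_self] at hIu
  have hmu := hmin u hus
  rw [hIn, hIu] at hmu
  have hkl : KLdiv pn u ≤ 0 := by nlinarith
  have hpnu : pn = u := eq_of_kl_le_zero pn u hpn hus huspos hkl
  constructor
  · intro a; rw [hpnu]; exact huspos a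
  · intro pstar hpstar
    have hIs := md_identity Qt q pt hqpos hptpos lam eta hlam heta pstar hpstar
    rw [hIs, hIn, hpnu, kl_self]
    ring

lemma md_pinsker {A : Type*} [Fintype A] (Qt : A → ℝ) (rmax : ℝ)
    (hQ : ∀ a, Qt a ∈ Set.Icc (0:ℝ) rmax)
    (x y : A → ℝ) (hx : x ∈ probSimplex A) (hy : y ∈ probSimplex A) (hypos : ∀ a, 0 < y a)
    (eta : ℝ) (heta : 0 < eta) :
    eta * ∑ a, Qt a * (x a - y a) ≤ KLdiv x y + eta^2 * rmax^2 / 4 := by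
  set L := ∑ a, |x a - y a| with hL
  set H := ∑ a, (Real.sqrt (x a) - Real.sqrt (y a))^2 with hH
  have hLnn : 0 ≤ L := Finset.sum_nonneg fun a _ => abs_nonneg _
  have hxy0 : ∑ a, (x a - y a) = 0 := by
    rw [Finset.sum_sub_distrib, hx.2, hy.2]; ring
  have h1 : ∑ a, Qt a * (x a - y a) = ∑ a, (Qt a - rmax/2) * (x a - y a) := by
    simp only [sub_mul]
    rw [Finset.sum_sub_distrib, ← Finset.mul_sum, hxy0, mul_zero, sub_zero]
  have h2 : ∑ a, (Qt a - rmax/2) * (x a - y a) ≤ (rmax/2) * L := by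
    rw [hL, Finset.mul_sum]
    refine Finset.sum_le_sum fun a _ => ?_
    have hqa := hQ a
    calc (Qt a - rmax/2) * (x a - y a) ≤ |(Qt a - rmax/2) * (x a - y a)| := le_abs_self _
      _ = |Qt a - rmax/2| * |x a - y a| := abs_mul _ _
      _ ≤ (rmax/2) * |x a - y a| := by
          apply mul_le_mul_of_nonneg_right _ (abs_nonneg _)
          rw [abs_le]; constructor <;> [linarith [hqa.1]; linarith [hqa.2]]
  have h3 : L^2 ≤ 4 * H := by
    have hterm : L = ∑ a, |Real.sqrt (x a) - Real.sqrt (y a)|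
        * (Real.sqrt (x a) + Real.sqrt (y a)) := by
      refine Finset.sum_congr rfl fun a _ => ?_
      rw [show x a - y a = (Real.sqrt (x a) - Real.sqrt (y a))
          * (Real.sqrt (x a) + Real.sqrt (y a)) by
        nlinarith [Real.sq_sqrt (hx.1 a), Real.sq_sqrt (hypos a).le]]
      rw [abs_mul, abs_of_nonneg (show (0:ℝ) ≤ Real.sqrt (x a) + Real.sqrt (y a) by positivity)]
    have hcs := Finset.sum_mul_sq_le_sq_mul_sq Finset.univ
      (fun a => |Real.sqrt (x a) - Real.sqrt (y a)|) (fun a => Real.sqrt (x a) + Real.sqrt (y a))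
    simp only [sq_abs] at hcs
    have hS : ∑ a, (Real.sqrt (x a) + Real.sqrt (y a))^2 ≤ 4 := by
      have hb : ∀ a ∈ Finset.univ, (Real.sqrt (x a) + Real.sqrt (y a))^2 ≤ 2 * x a + 2 * y a := by
        intro a _
        nlinarith [Real.sq_sqrt (hx.1 a), Real.sq_sqrt (hypos a).le,
          sq_nonneg (Real.sqrt (x a) - Real.sqrt (y a))]
      calc ∑ a, (Real.sqrt (x a) + Real.sqrt (y a))^2 ≤ ∑ a, (2 * x a + 2 * y a) :=
            Finset.sum_le_sum hb
        _ = 4 := by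
            rw [Finset.sum_add_distrib, ← Finset.mul_sum, ← Finset.mul_sum, hx.2, hy.2]; norm_num
    have hHnn : 0 ≤ H := Finset.sum_nonneg fun a _ => sq_nonneg _
    calc L^2 = (∑ a, |Real.sqrt (x a) - Real.sqrt (y a)|
        * (Real.sqrt (x a) + Real.sqrt (y a)))^2 := by rw [hterm]
      _ ≤ H * ∑ a, (Real.sqrt (x a) + Real.sqrt (y a))^2 := hcs
      _ ≤ 4 * H := by nlinarith
  have h4 : H ≤ KLdiv x y := kl_ge_hellinger x y hx hy hypos
  have h5 : eta * ∑ a, Qt a * (x a - y a) ≤ eta * ((rmax/2) * L) := by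
    rw [h1]; exact mul_le_mul_of_nonneg_left h2 heta.le
  nlinarith [sq_nonneg (L - eta * rmax)]

/-- **Telescoped mirror descent regret bound.**  Let `q` be a strictly positive distribution on
a finite set `A`, `λ, η > 0`.  Define `p¹ = q` and, for `t = 1,…,T`, let `p^{t+1}` minimize
`p ↦ ⟨−Qᵗ, p⟩ + λ·KL(p‖q) + (1/η)·KL(p‖pᵗ)` over the simplex, where `Qᵗ : A → [0, r_max]`.
Then for every `p* ∈ Δ(A)`:
`Σ_{t=1}^T (η·⟨Qᵗ, p* − pᵗ⟩ + ηλ·KL(pᵗ‖q) − ηλ·KL(p*‖q)) ≤ KL(p*‖q) + T·η²·r_max²/2`. -/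
theorem md_telescoped_regret {A : Type*} [Fintype A]
    (q : A → ℝ) (hq : q ∈ probSimplex A) (hqpos : ∀ a, 0 < q a)
    (lam eta rmax : ℝ) (hlam : 0 < lam) (heta : 0 < eta)
    (T : ℕ)
    (Q : ℕ → A → ℝ) (hQ : ∀ t a, Q t a ∈ Set.Icc (0 : ℝ) rmax)
    (p : ℕ → A → ℝ) (hp1 : p 1 = q)
    (hupd : ∀ t, 1 ≤ t → t ≤ T →
      p (t + 1) ∈ probSimplex A ∧
      ∀ p' ∈ probSimplex A,
        mdObj (Q t) q (p t) lam eta (p (t + 1)) ≤ mdObj (Q t) q (p t) lam eta p') :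
    ∀ pstar ∈ probSimplex A,
      ∑ t ∈ Finset.Icc 1 T,
          (eta * (∑ a, Q t a * (pstar a - p t a)) + eta * lam * KLdiv (p t) q
            - eta * lam * KLdiv pstar q)
        ≤ KLdiv pstar q + T * eta ^ 2 * rmax ^ 2 / 2 := by
  intro pstar hpstar
  have hA : Nonempty A := by
    by_contra h
    rw [not_nonempty_iff] at h
    have h2 := hq.2
    rw [Finset.univ_eq_empty, Finset.sum_empty] at h2
    norm_num at h2
  have main : ∀ n, n ≤ T →
      (p (n+1) ∈ probSimplex A ∧ (∀ a, 0 < p (n+1) a)) ∧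
      ∑ t ∈ Finset.Icc 1 n,
          (eta * (∑ a, Q t a * (pstar a - p t a)) + eta * lam * KLdiv (p t) q
            - eta * lam * KLdiv pstar q)
        ≤ (KLdiv pstar q - KLdiv pstar (p (n+1)))
          + eta * lam * (0 - KLdiv (p (n+1)) q) + n * (eta^2 * rmax^2 / 2) := by
    intro n
    induction n with
    | zero =>
      intro _
      refine ⟨⟨by rw [hp1]; exact hq, by rw [hp1]; exact hqpos⟩, ?_⟩
      rw [show (0:ℕ)+1 = 1 from rfl, hp1, kl_self]
      simp
    | succ n ih =>
      intro hn
      obtain ⟨⟨hsimp, hpos⟩, hsum⟩ := ih (by omega)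
      obtain ⟨hpn2, hmin⟩ := hupd (n+1) (by omega) hn
      obtain ⟨hpos2, hpush⟩ :=
        md_step (Q (n+1)) q (p (n+1)) (p (n+1+1)) hqpos hpos lam eta hlam heta hpn2 hmin
      refine ⟨⟨hpn2, hpos2⟩, ?_⟩
      -- abbreviations
      set s1 := ∑ a, Q (n+1) a * pstar a with hs1
      set s2 := ∑ a, Q (n+1) a * p (n+1) a with hs2
      set s3 := ∑ a, Q (n+1) a * p (n+1+1) a with hs3
      have hpushE := hpush pstar hpstar
      rw [mdObj, mdObj] at hpushE
      have e1 : ∑ a, -Q (n+1) a * pstar a = -s1 := by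
        rw [hs1, ← Finset.sum_neg_distrib]
        exact Finset.sum_congr rfl fun a _ => by ring
      have e3 : ∑ a, -Q (n+1) a * p (n+1+1) a = -s3 := by
        rw [hs3, ← Finset.sum_neg_distrib]
        exact Finset.sum_congr rfl fun a _ => by ring
      rw [e1, e3] at hpushE
      have hpins := md_pinsker (Q (n+1)) rmax (hQ (n+1)) (p (n+1+1)) (p (n+1))
        hpn2 hsimp hpos eta heta
      have e4 : ∑ a, Q (n+1) a * (p (n+1+1) a - p (n+1) a) = s3 - s2 := by
        rw [hs3, hs2, ← Finset.sum_sub_distrib]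
        exact Finset.sum_congr rfl fun a _ => by ring
      rw [e4] at hpins
      have e5 : ∑ a, Q (n+1) a * (pstar a - p (n+1) a) = s1 - s2 := by
        rw [hs1, hs2, ← Finset.sum_sub_distrib]
        exact Finset.sum_congr rfl fun a _ => by ring
      have hDn : 0 ≤ KLdiv pstar (p (n+1+1)) := kl_nonneg _ _ hpstar hpn2 hpos2
      have hstep : eta * (∑ a, Q (n+1) a * (pstar a - p (n+1) a))
            + eta * lam * KLdiv (p (n+1)) q - eta * lam * KLdiv pstar q
          ≤ (KLdiv pstar (p (n+1)) - KLdiv pstar (p (n+1+1)))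
            + eta * lam * (KLdiv (p (n+1)) q - KLdiv (p (n+1+1)) q)
            + eta^2 * rmax^2 / 2 := by
        rw [e5]
        have hene : eta ≠ 0 := heta.ne'
        field_simp at hpushE
        nlinarith [hpushE, hpins, hDn, mul_nonneg (mul_nonneg heta.le hlam.le) hDn,
          sq_nonneg (eta * rmax)]
      rw [Finset.sum_Icc_succ_top (by omega : 1 ≤ n+1)]
      have hcast : ((n+1 : ℕ) : ℝ) = (n : ℝ) + 1 := by push_cast; ring
      rw [hcast]
      linarith [hsum, hstep]
  obtain ⟨⟨hsimpT, hposT⟩, hsumT⟩ := main T le_rfl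
  have hD : 0 ≤ KLdiv pstar (p (T+1)) := kl_nonneg _ _ hpstar hsimpT hposT
  have hE : 0 ≤ KLdiv (p (T+1)) q := kl_nonneg _ _ hsimpT hq hqpos
  have hlam' : 0 ≤ eta * lam := by positivity
  nlinarith [hsumT, mul_nonneg hlam' hE]
end
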